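/- The operadic compositions on symmetric groups satisfy parallel associativity (horizontal commutativity): for all permutations x of {1,…,r}, y of {1,…,s}, z of {1,…,t}, and indices 1 ≤ i < j ≤ r, one has (x ∘_j z) ∘_i y = (x ∘_i y) ∘_{j+s−1} z in S_{r+s+t−2}. -/
import Mathlib


/-- The operadic composition `σ ∘ᵢ τ` of permutations, as an explicit function on
`{1, …, r+s-1}`.  Here `σ` is a bijection of `{1, …, r}`, `τ` is a bijection of
`{1, …, s}`, `1 ≤ i ≤ r`, and `p = σ⁻¹(i)`. -/
def opComp (σ τ : ℕ → ℕ) (s i p : ℕ) : ℕ → ℕ := fun k =>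
  if k < p then
    if σ k < i then σ k else σ k + s - 1
  else if k ≤ p + s - 1 then
    τ (k - p + 1) + i - 1
  else
    if σ (k - s + 1) < i then σ (k - s + 1) else σ (k - s + 1) + s - 1

lemma opComp_lt {σ τ : ℕ → ℕ} {s i p k : ℕ} (h : k < p) :
    opComp σ τ s i p k = if σ k < i then σ k else σ k + s - 1 := by
  simp [opComp, h]

lemma opComp_mid {σ τ : ℕ → ℕ} {s i p k : ℕ} (h1 : ¬ k < p) (h2 : k ≤ p + s - 1) :
    opComp σ τ s i p k = τ (k - p + 1) + i - 1 := by
  simp [opComp, h1, h2]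

lemma opComp_gt {σ τ : ℕ → ℕ} {s i p k : ℕ} (h1 : ¬ k < p) (h2 : ¬ k ≤ p + s - 1) :
    opComp σ τ s i p k =
      if σ (k - s + 1) < i then σ (k - s + 1) else σ (k - s + 1) + s - 1 := by
  simp [opComp, h1, h2]

set_option maxHeartbeats 1600000 in
/-- Parallel associativity (horizontal commutativity) of the operadic
compositions on symmetric groups: for `x ∈ S_r`, `y ∈ S_s`, `z ∈ S_t` and
`1 ≤ i < j ≤ r`, `(x ∘ⱼ z) ∘ᵢ y = (x ∘ᵢ y) ∘_{j+s-1} z` in `S_{r+s+t-2}`.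
Here `pi = x⁻¹(i)`, `pj = x⁻¹(j)`, `p' = (x ∘ⱼ z)⁻¹(i)` and `p'' = (x ∘ᵢ y)⁻¹(j+s-1)`. -/
theorem stmt6 (r s t i j : ℕ) (hs : 1 ≤ s) (ht : 1 ≤ t)
    (hi : 1 ≤ i) (hij : i < j) (hjr : j ≤ r)
    (x y z : ℕ → ℕ)
    (hx : Set.BijOn x (Set.Icc 1 r) (Set.Icc 1 r))
    (hy : Set.BijOn y (Set.Icc 1 s) (Set.Icc 1 s))
    (hz : Set.BijOn z (Set.Icc 1 t) (Set.Icc 1 t))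
    (pi : ℕ) (hpi : pi ∈ Set.Icc 1 r) (hxpi : x pi = i)
    (pj : ℕ) (hpj : pj ∈ Set.Icc 1 r) (hxpj : x pj = j)
    (p' : ℕ) (hp' : p' ∈ Set.Icc 1 (r + t - 1))
    (hxzp' : opComp x z t j pj p' = i)
    (p'' : ℕ) (hp'' : p'' ∈ Set.Icc 1 (r + s - 1))
    (hxyp'' : opComp x y s i pi p'' = j + s - 1) :
    Set.EqOn (opComp (opComp x z t j pj) y s i p')
      (opComp (opComp x y s i pi) z t (j + s - 1) p'')
      (Set.Icc 1 (r + s + t - 2)) := by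
  obtain ⟨hpi1, hpi2⟩ := hpi
  obtain ⟨hpj1, hpj2⟩ := hpj
  obtain ⟨hp'1, hp'2⟩ := hp'
  obtain ⟨hp''1, hp''2⟩ := hp''
  have hxm : ∀ a, 1 ≤ a → a ≤ r → 1 ≤ x a ∧ x a ≤ r := fun a h1 h2 =>
    Set.mem_Icc.mp (hx.mapsTo (Set.mem_Icc.mpr ⟨h1, h2⟩))
  have hym : ∀ a, 1 ≤ a → a ≤ s → 1 ≤ y a ∧ y a ≤ s := fun a h1 h2 =>
    Set.mem_Icc.mp (hy.mapsTo (Set.mem_Icc.mpr ⟨h1, h2⟩))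
  have hzm : ∀ a, 1 ≤ a → a ≤ t → 1 ≤ z a ∧ z a ≤ t := fun a h1 h2 =>
    Set.mem_Icc.mp (hz.mapsTo (Set.mem_Icc.mpr ⟨h1, h2⟩))
  have hnei : ∀ a, 1 ≤ a → a ≤ r → a ≠ pi → x a ≠ i := by
    intro a h1 h2 hne hxa
    exact hne (hx.injOn (Set.mem_Icc.mpr ⟨h1, h2⟩) (Set.mem_Icc.mpr ⟨hpi1, hpi2⟩)
      (hxa.trans hxpi.symm))
  have hnej : ∀ a, 1 ≤ a → a ≤ r → a ≠ pj → x a ≠ j := by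
    intro a h1 h2 hne hxa
    exact hne (hx.injOn (Set.mem_Icc.mpr ⟨h1, h2⟩) (Set.mem_Icc.mpr ⟨hpj1, hpj2⟩)
      (hxa.trans hxpj.symm))
  have heqi : ∀ a, 1 ≤ a → a ≤ r → x a = i → a = pi := by
    intro a h1 h2 hxa
    exact hx.injOn (Set.mem_Icc.mpr ⟨h1, h2⟩) (Set.mem_Icc.mpr ⟨hpi1, hpi2⟩)
      (hxa.trans hxpi.symm)
  have heqj : ∀ a, 1 ≤ a → a ≤ r → x a = j → a = pj := by
    intro a h1 h2 hxa
    exact hx.injOn (Set.mem_Icc.mpr ⟨h1, h2⟩) (Set.mem_Icc.mpr ⟨hpj1, hpj2⟩)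
      (hxa.trans hxpj.symm)
  have hpij : pi ≠ pj := by
    intro h; rw [h, hxpj] at hxpi; omega
  -- determine p'
  have key' : (pi < pj ∧ p' = pi) ∨ (pj < pi ∧ p' = pi + t - 1) := by
    unfold opComp at hxzp'
    split_ifs at hxzp' with h1 h2 h3 h4
    · -- p' < pj, x p' < j, x p' = i
      have := heqi p' hp'1 (by omega) hxzp'
      left; omega
    · omega
    · obtain ⟨hb1, hb2⟩ := hzm (p' - pj + 1) (by omega) (by omega)
      omega
    · have := heqi (p' - t + 1) (by omega) (by omega) hxzp'
      right
      constructor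
      · omega
      · omega
    · omega
  -- determine p''
  have key'' : (pi < pj ∧ p'' = pj + s - 1) ∨ (pj < pi ∧ p'' = pj) := by
    unfold opComp at hxyp''
    split_ifs at hxyp'' with h1 h2 h3 h4
    · obtain ⟨hb1, hb2⟩ := hxm p'' hp''1 (by omega)
      omega
    · have hxj : x p'' = j := by omega
      have := heqj p'' hp''1 (by omega) hxj
      right; omega
    · obtain ⟨hb1, hb2⟩ := hym (p'' - pi + 1) (by omega) (by omega)
      omega
    · obtain ⟨hb1, hb2⟩ := hxm (p'' - s + 1) (by omega) (by omega)
      omega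
    · have hxj : x (p'' - s + 1) = j := by omega
      have := heqj (p'' - s + 1) (by omega) (by omega) hxj
      left
      constructor
      · omega
      · omega
  intro k hk
  obtain ⟨hk1, hk2⟩ := hk
  rcases key' with ⟨hA, hp'eq⟩ | ⟨hB, hp'eq⟩
  · -- Case A : pi < pj, p' = pi, p'' = pj + s - 1
    have hp''eq : p'' = pj + s - 1 := by
      rcases key'' with ⟨_, h⟩ | ⟨h, _⟩
      · exact h
      · omega
    rw [show (opComp (opComp x z t j pj) y s i p' k
        = opComp (opComp x y s i pi) z t (j + s - 1) p'' k)
        ↔ (opComp (opComp x z t j pj) y s i pi k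
        = opComp (opComp x y s i pi) z t (j + s - 1) (pj + s - 1) k) by
      rw [hp'eq, hp''eq]]
    by_cases hc1 : k < pi
    · rw [opComp_lt hc1, opComp_lt (show k < pj by omega),
        opComp_lt (show k < pj + s - 1 by omega), opComp_lt hc1]
      obtain ⟨hb1, hb2⟩ := hxm k hk1 (by omega)
      have h2 := hnei k hk1 (by omega) (by omega)
      have h3 := hnej k hk1 (by omega) (by omega)
      split_ifs <;> omega
    · by_cases hc2 : k ≤ pi + s - 1
      · rw [opComp_mid hc1 hc2, opComp_lt (show k < pj + s - 1 by omega),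
          opComp_mid hc1 hc2]
        obtain ⟨hb1, hb2⟩ := hym (k - pi + 1) (by omega) (by omega)
        split_ifs <;> omega
      · by_cases hc3 : k < pj + s - 1
        · rw [opComp_gt hc1 hc2, opComp_lt (show k - s + 1 < pj by omega),
            opComp_lt hc3, opComp_gt hc1 hc2]
          obtain ⟨hb1, hb2⟩ := hxm (k - s + 1) (by omega) (by omega)
          have h2 := hnei (k - s + 1) (by omega) (by omega) (by omega)
          have h3 := hnej (k - s + 1) (by omega) (by omega) (by omega)
          split_ifs <;> omega
        · by_cases hc4 : k ≤ pj + s - 1 + t - 1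
          · rw [opComp_gt hc1 hc2,
              opComp_mid (show ¬ k - s + 1 < pj by omega)
                (show k - s + 1 ≤ pj + t - 1 by omega),
              opComp_mid (show ¬ k < pj + s - 1 by omega) hc4]
            have harg : k - s + 1 - pj + 1 = k - (pj + s - 1) + 1 := by omega
            rw [harg]
            obtain ⟨hb1, hb2⟩ := hzm (k - (pj + s - 1) + 1) (by omega) (by omega)
            split_ifs <;> omega
          · rw [opComp_gt hc1 hc2,
              opComp_gt (show ¬ k - s + 1 < pj by omega)
                (show ¬ k - s + 1 ≤ pj + t - 1 by omega),
              opComp_gt (show ¬ k < pj + s - 1 by omega) hc4,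
              opComp_gt (show ¬ k - t + 1 < pi by omega)
                (show ¬ k - t + 1 ≤ pi + s - 1 by omega)]
            have harg : k - s + 1 - t + 1 = k - t + 1 - s + 1 := by omega
            rw [harg]
            obtain ⟨hb1, hb2⟩ := hxm (k - t + 1 - s + 1) (by omega) (by omega)
            have h2 := hnei (k - t + 1 - s + 1) (by omega) (by omega) (by omega)
            have h3 := hnej (k - t + 1 - s + 1) (by omega) (by omega) (by omega)
            split_ifs <;> omega
  · -- Case B : pj < pi, p' = pi + t - 1, p'' = pj
    have hp''eq : p'' = pj := by
      rcases key'' with ⟨h, _⟩ | ⟨_, h⟩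
      · omega
      · exact h
    rw [show (opComp (opComp x z t j pj) y s i p' k
        = opComp (opComp x y s i pi) z t (j + s - 1) p'' k)
        ↔ (opComp (opComp x z t j pj) y s i (pi + t - 1) k
        = opComp (opComp x y s i pi) z t (j + s - 1) pj k) by
      rw [hp'eq, hp''eq]]
    by_cases hc1 : k < pj
    · rw [opComp_lt (show k < pi + t - 1 by omega), opComp_lt hc1,
        opComp_lt hc1, opComp_lt (show k < pi by omega)]
      obtain ⟨hb1, hb2⟩ := hxm k hk1 (by omega)
      have h2 := hnei k hk1 (by omega) (by omega)
      have h3 := hnej k hk1 (by omega) (by omega)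
      split_ifs <;> omega
    · by_cases hc2 : k ≤ pj + t - 1
      · rw [opComp_lt (show k < pi + t - 1 by omega), opComp_mid hc1 hc2,
          opComp_mid hc1 hc2]
        obtain ⟨hb1, hb2⟩ := hzm (k - pj + 1) (by omega) (by omega)
        split_ifs <;> omega
      · by_cases hc3 : k < pi + t - 1
        · rw [opComp_lt hc3, opComp_gt hc1 hc2, opComp_gt hc1 hc2,
            opComp_lt (show k - t + 1 < pi by omega)]
          obtain ⟨hb1, hb2⟩ := hxm (k - t + 1) (by omega) (by omega)
          have h2 := hnei (k - t + 1) (by omega) (by omega) (by omega)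
          have h3 := hnej (k - t + 1) (by omega) (by omega) (by omega)
          split_ifs <;> omega
        · by_cases hc4 : k ≤ pi + t - 1 + s - 1
          · rw [opComp_mid hc3 hc4, opComp_gt hc1 hc2,
              opComp_mid (show ¬ k - t + 1 < pi by omega)
                (show k - t + 1 ≤ pi + s - 1 by omega)]
            have harg : k - (pi + t - 1) + 1 = k - t + 1 - pi + 1 := by omega
            rw [harg]
            obtain ⟨hb1, hb2⟩ := hym (k - t + 1 - pi + 1) (by omega) (by omega)
            split_ifs <;> omega
          · rw [opComp_gt hc3 hc4,
              opComp_gt (show ¬ k - s + 1 < pj by omega)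
                (show ¬ k - s + 1 ≤ pj + t - 1 by omega),
              opComp_gt hc1 hc2,
              opComp_gt (show ¬ k - t + 1 < pi by omega)
                (show ¬ k - t + 1 ≤ pi + s - 1 by omega)]
            have harg : k - s + 1 - t + 1 = k - t + 1 - s + 1 := by omega
            rw [harg]
            obtain ⟨hb1, hb2⟩ := hxm (k - t + 1 - s + 1) (by omega) (by omega)
            have h2 := hnei (k - t + 1 - s + 1) (by omega) (by omega) (by omega)
            have h3 := hnej (k - t + 1 - s + 1) (by omega) (by omega) (by omega)
            split_ifs <;> omega
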